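/- Let i, j, k, l be integers with 0 < i < k ≤ j < l, and set r = k − i, c = l − j; assume r < c < k. For an integer p with 1 ≤ p ≤ r + 1 put i_p := k − p + 1 and define in ℚ(t): H_p := P_j·P_{l−i_p}/(P_{i_p}·P_{j−i_p}·P_{k−i_p}·P_{l−k}), I_p := P_{l−j}·P_{k+j−i_p}/(P_{k−i_p}·P_{l−j−k+i_p}·P_k·P_{j−i_p}), and for integers q < p define f_{pq} := P_{k−c}/(P_{p−q}·P_{k−c−p+q}) if p − q ≤ k − c and f_{pq} := 0 otherwise, and d_{pq} := (p−q)(c+1−q). Then for every p with 2 ≤ p ≤ r + 1 one has I_p = H_p − Σ_{q=1}^{p−1} t^{2·d_{pq}} · f_{pq} · I_q in ℚ(t). -/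

import Mathlib

open Polynomial

/-- `hpoly α = 1 + t^2 + ⋯ + t^{2α}` for `α ≥ 0`. -/
noncomputable def hpoly (α : ℤ) : Polynomial ℚ :=
  ∑ m ∈ Finset.range (α.toNat + 1), X ^ (2 * m)

/-- `Ppoly 0 = 1` and `Ppoly α = hpoly 0 ⋯ hpoly (α-1)` for `α > 0`. -/
noncomputable def Ppoly (α : ℤ) : Polynomial ℚ :=
  ∏ m ∈ Finset.range α.toNat, hpoly (m : ℤ)

/-- The image of `hpoly α` in the field of rational functions `ℚ(t)`. -/
noncomputable def hQ (α : ℤ) : RatFunc ℚ :=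
  algebraMap (Polynomial ℚ) (RatFunc ℚ) (hpoly α)

/-- The image of `Ppoly α` in the field of rational functions `ℚ(t)`. -/
noncomputable def PQ (α : ℤ) : RatFunc ℚ :=
  algebraMap (Polynomial ℚ) (RatFunc ℚ) (Ppoly α)

/-- The variable `t` of `ℚ(t)`. -/
noncomputable def tQ : RatFunc ℚ := RatFunc.X

/-- `H_p`: the Poincaré polynomial of the resolution of the stratum `Δ_p`,
with `i_p = k - p + 1`. -/
noncomputable def Hpol (j k l p : ℤ) : RatFunc ℚ :=
  PQ j * PQ (l - (k - p + 1)) /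
    (PQ (k - p + 1) * PQ (j - (k - p + 1)) * PQ (k - (k - p + 1)) * PQ (l - k))

/-- `I_p`: the intersection cohomology Poincaré polynomial of `Δ_p`,
with `i_p = k - p + 1`. -/
noncomputable def Ipol (j k l p : ℤ) : RatFunc ℚ :=
  PQ (l - j) * PQ (k + j - (k - p + 1)) /
    (PQ (k - (k - p + 1)) * PQ (l - j - k + (k - p + 1)) * PQ k *
      PQ (j - (k - p + 1)))

/-- `f_{pq}`. -/
noncomputable def fpol (k c p q : ℤ) : RatFunc ℚ :=
  if p - q ≤ k - c then PQ (k - c) / (PQ (p - q) * PQ (k - c - p + q)) else 0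

/-!
With `q = t²` one has `P_α = [α]_q!`, so `H_p`, `I_p` and `f_{pq}` are products of Gaussian
binomial coefficients. Writing `n = p - 1` and `s = p - q`, the recursion becomes
`[j, k-n] [j+c-k+n, n] = ∑_{s ≤ n} q^{s(c-n+s)} [k-c, s] [c, n-s] [j+n-s, k]`
(the `s = 0` term being `I_p`). Expanding `[j+n-s, k]` by `q`-Vandermonde and summing over `s`
first, the inner sum collapses by trinomial revision and a second `q`-Vandermonde; trinomial
revision and a third `q`-Vandermonde then sum up the rest.
-/

open Finset

section QBinomial

variable {F : Type*} [Field F] {q : F}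

def qNumber (q : F) (n : ℕ) : F := ∑ i ∈ range n, q ^ i

def qFactorial (q : F) (n : ℕ) : F := ∏ m ∈ range n, qNumber q (m + 1)

def qBinomial (q : F) (a b : ℕ) : F :=
  if b ≤ a then qFactorial q a / (qFactorial q b * qFactorial q (a - b)) else 0

theorem qNumber_add (q : F) (a b : ℕ) :
    qNumber q (a + b) = qNumber q a + q ^ a * qNumber q b := by
  simp only [qNumber, sum_range_add, mul_sum, pow_add]

@[simp]
theorem qFactorial_zero (q : F) : qFactorial q 0 = 1 := by
  simp [qFactorial]

theorem qFactorial_succ (q : F) (n : ℕ) :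
    qFactorial q (n + 1) = qFactorial q n * qNumber q (n + 1) :=
  prod_range_succ _ n

theorem qFactorial_ne_zero (hq : ∀ n, qNumber q (n + 1) ≠ 0) (n : ℕ) :
    qFactorial q n ≠ 0 :=
  prod_ne_zero_iff.2 fun m _ => hq m

theorem qBinomial_of_le {a b : ℕ} (h : b ≤ a) :
    qBinomial q a b = qFactorial q a / (qFactorial q b * qFactorial q (a - b)) :=
  if_pos h

theorem qBinomial_of_lt {a b : ℕ} (h : a < b) : qBinomial q a b = 0 :=
  if_neg (Nat.not_le.2 h)

theorem qBinomial_zero_right (hq : ∀ n, qNumber q (n + 1) ≠ 0) (a : ℕ) :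
    qBinomial q a 0 = 1 := by
  rw [qBinomial_of_le a.zero_le, qFactorial_zero, one_mul, Nat.sub_zero,
    div_self (qFactorial_ne_zero hq a)]

theorem qBinomial_self (hq : ∀ n, qNumber q (n + 1) ≠ 0) (a : ℕ) : qBinomial q a a = 1 := by
  rw [qBinomial_of_le le_rfl, Nat.sub_self, qFactorial_zero, mul_one,
    div_self (qFactorial_ne_zero hq a)]

theorem qBinomial_symm {a b : ℕ} (h : b ≤ a) : qBinomial q a (a - b) = qBinomial q a b := by
  rw [qBinomial_of_le h, qBinomial_of_le (Nat.sub_le a b), Nat.sub_sub_self h, mul_comm]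

theorem qBinomial_succ_succ (hq : ∀ n, qNumber q (n + 1) ≠ 0) (n k : ℕ) :
    qBinomial q (n + 1) (k + 1) = q ^ ((n : ℤ) - k) * qBinomial q n k + qBinomial q n (k + 1) := by
  obtain hkn | rfl | hnk := lt_trichotomy k n
  · obtain ⟨d, rfl⟩ := Nat.exists_eq_add_of_lt hkn
    have hsplit := qNumber_add q (d + 1) (k + 1)
    rw [qBinomial_of_le (by omega), qBinomial_of_le (by omega), qBinomial_of_le (by omega),
      show k + d + 1 + 1 - (k + 1) = d + 1 by omega, show k + d + 1 - k = d + 1 by omega,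
      show k + d + 1 - (k + 1) = d by omega, show ((k + d + 1 : ℕ) : ℤ) - k = ((d + 1 : ℕ) : ℤ) by
        push_cast; ring, zpow_natCast, qFactorial_succ q (k + d + 1), qFactorial_succ q k,
      qFactorial_succ q d]
    have := qFactorial_ne_zero hq k
    have := qFactorial_ne_zero hq d
    have := hq k
    have := hq d
    field_simp
    rw [show k + d + 1 + 1 = d + 1 + (k + 1) by ring, hsplit]
    ring
  · rw [qBinomial_self hq, qBinomial_self hq, qBinomial_of_lt (Nat.lt_succ_self k), sub_self,
      zpow_zero, one_mul, add_zero]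
  · rw [qBinomial_of_lt (by omega), qBinomial_of_lt hnk, qBinomial_of_lt (by omega), mul_zero,
      add_zero]

theorem qBinomial_mul_qBinomial (hq : ∀ n, qNumber q (n + 1) ≠ 0) {a b c : ℕ} (h : c ≤ b) :
    qBinomial q a b * qBinomial q b c = qBinomial q a c * qBinomial q (a - c) (b - c) := by
  rcases le_or_gt b a with hba | hab
  · rw [qBinomial_of_le hba, qBinomial_of_le h, qBinomial_of_le (h.trans hba),
      qBinomial_of_le (by omega : b - c ≤ a - c), show a - c - (b - c) = a - b by omega]
    have := qFactorial_ne_zero hq b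
    have := qFactorial_ne_zero hq (a - b)
    have := qFactorial_ne_zero hq c
    have := qFactorial_ne_zero hq (b - c)
    have := qFactorial_ne_zero hq (a - c)
    field_simp
  · rw [qBinomial_of_lt hab, zero_mul]
    rcases le_or_gt c a with hca | hac
    · rw [qBinomial_of_lt (by omega : a - c < b - c), mul_zero]
    · rw [qBinomial_of_lt hac, zero_mul]

/-- The `q`-Vandermonde identity. -/
theorem qBinomial_add_eq_sum (hq0 : q ≠ 0) (hq : ∀ n, qNumber q (n + 1) ≠ 0) (m n k : ℕ) :
    qBinomial q (m + n) k =
      ∑ s ∈ range (k + 1), q ^ ((s : ℤ) * (m - k + s)) * qBinomial q n s * qBinomial q m (k - s) := by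
  induction n generalizing k with
  | zero =>
    rw [sum_eq_single_of_mem 0 (by simp)]
    · simp [qBinomial_zero_right hq]
    · intro s _ hs
      rw [qBinomial_of_lt (Nat.pos_of_ne_zero hs), mul_zero, zero_mul]
  | succ n ih =>
    cases k with
    | zero => simp [qBinomial_zero_right hq]
    | succ k =>
      have hterm : ∀ s ∈ range (k + 1),
          q ^ (((s + 1 : ℕ) : ℤ) * (m - (k + 1 : ℕ) + (s + 1 : ℕ))) * qBinomial q (n + 1) (s + 1) *
              qBinomial q m (k + 1 - (s + 1)) =
            q ^ ((m : ℤ) + n - k) *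
                (q ^ ((s : ℤ) * (m - k + s)) * qBinomial q n s * qBinomial q m (k - s)) +
              q ^ (((s + 1 : ℕ) : ℤ) * (m - (k + 1 : ℕ) + (s + 1 : ℕ))) *
                qBinomial q n (s + 1) * qBinomial q m (k + 1 - (s + 1)) := by
        intro s _
        have hpow : q ^ (((s + 1 : ℕ) : ℤ) * (m - (k + 1 : ℕ) + (s + 1 : ℕ))) * q ^ ((n : ℤ) - s) =
            q ^ ((m : ℤ) + n - k) * q ^ ((s : ℤ) * (m - k + s)) := by
          rw [← zpow_add₀ hq0, ← zpow_add₀ hq0]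
          push_cast
          ring_nf
        rw [qBinomial_succ_succ hq n s, Nat.add_sub_add_right]
        linear_combination qBinomial q n s * qBinomial q m (k - s) * hpow
      have ih_succ := ih (k + 1)
      rw [sum_range_succ'] at ih_succ
      rw [← add_assoc, qBinomial_succ_succ hq, sum_range_succ', sum_congr rfl hterm,
        sum_add_distrib, ← mul_sum, ← ih k, add_assoc, ih_succ]
      simp [qBinomial_zero_right hq]

theorem qBinomial_mul_qBinomial_sub_eq_sum (hq0 : q ≠ 0) (hq : ∀ n, qNumber q (n + 1) ≠ 0)
    {k c n u : ℕ} (hun : u ≤ n) (hnc : n ≤ c) (hck : c ≤ k) :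
    ∑ s ∈ range (n + 1), q ^ ((s : ℤ) * (c - n + s)) * qBinomial q (k - c) s *
        qBinomial q c (n - s) * qBinomial q (n - s) u =
      qBinomial q c u * qBinomial q (k - u) (n - u) := by
  have hshrink : ∑ s ∈ range (n - u + 1), q ^ ((s : ℤ) * (c - n + s)) * qBinomial q (k - c) s *
        qBinomial q c (n - s) * qBinomial q (n - s) u =
      ∑ s ∈ range (n + 1), q ^ ((s : ℤ) * (c - n + s)) * qBinomial q (k - c) s *
        qBinomial q c (n - s) * qBinomial q (n - s) u := by
    refine sum_subset (range_subset_range.2 (by omega)) fun s hs hsu => ?_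
    rw [mem_range] at hs hsu
    rw [qBinomial_of_lt (by omega : n - s < u), mul_zero]
  have hterm : ∀ s ∈ range (n - u + 1), q ^ ((s : ℤ) * (c - n + s)) * qBinomial q (k - c) s *
        qBinomial q c (n - s) * qBinomial q (n - s) u =
      qBinomial q c u * (q ^ ((s : ℤ) * ((c - u : ℕ) - (n - u : ℕ) + s)) * qBinomial q (k - c) s *
        qBinomial q (c - u) (n - u - s)) := by
    intro s hs
    rw [mem_range] at hs
    rw [mul_assoc, qBinomial_mul_qBinomial hq (by omega : u ≤ n - s),
      show n - s - u = n - u - s by omega, Nat.cast_sub (by omega : u ≤ c),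
      Nat.cast_sub (by omega : u ≤ n)]
    ring_nf
  rw [← hshrink, sum_congr rfl hterm, ← mul_sum, ← qBinomial_add_eq_sum hq0 hq,
    show c - u + (k - c) = k - u by omega]

theorem qBinomial_mul_qBinomial_eq_sum (hq0 : q ≠ 0) (hq : ∀ n, qNumber q (n + 1) ≠ 0)
    {j k c n : ℕ} (hnc : n ≤ c) (hck : c ≤ k) (hkj : k ≤ j) :
    qBinomial q j (k - n) * qBinomial q (j + c - k + n) n =
      ∑ s ∈ range (n + 1), q ^ ((s : ℤ) * (c - n + s)) * qBinomial q (k - c) s *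
        qBinomial q c (n - s) * qBinomial q (j + n - s) k := by
  have hexpand : ∀ s ∈ range (n + 1), qBinomial q (j + n - s) k =
      ∑ u ∈ range (n + 1), q ^ ((u : ℤ) * (j - k + u)) * qBinomial q (n - s) u *
        qBinomial q j (k - u) := by
    intro s hs
    rw [show j + n - s = j + (n - s) by rw [mem_range] at hs; omega,
      qBinomial_add_eq_sum hq0 hq]
    refine (sum_subset (range_subset_range.2 (by omega)) fun u hu hun => ?_).symm
    rw [mem_range] at hu hun
    rw [qBinomial_of_lt (by omega : n - s < u), mul_zero, zero_mul]
  have hrevision : ∀ u ∈ range (n + 1),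
      q ^ ((u : ℤ) * (j - k + u)) * qBinomial q j (k - u) *
          (qBinomial q c u * qBinomial q (k - u) (n - u)) =
        qBinomial q j (k - n) * (q ^ ((u : ℤ) * ((j - (k - n) : ℕ) - n + u)) *
          qBinomial q c u * qBinomial q (j - (k - n)) (n - u)) := by
    intro u hu
    rw [mem_range] at hu
    have h := qBinomial_mul_qBinomial (q := q) hq (a := j) (by omega : k - n ≤ k - u)
    have hsymm : qBinomial q (k - u) (k - n) = qBinomial q (k - u) (n - u) := by
      rw [show k - n = k - u - (n - u) by omega, qBinomial_symm (by omega)]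
    rw [show k - u - (k - n) = n - u by omega, hsymm] at h
    rw [show ((j - (k - n) : ℕ) : ℤ) - n + u = (j : ℤ) - k + u by omega]
    linear_combination (q ^ ((u : ℤ) * (j - k + u)) * qBinomial q c u) * h
  calc qBinomial q j (k - n) * qBinomial q (j + c - k + n) n
      = ∑ u ∈ range (n + 1), q ^ ((u : ℤ) * (j - k + u)) * qBinomial q j (k - u) *
          (qBinomial q c u * qBinomial q (k - u) (n - u)) := by
        rw [sum_congr rfl hrevision, ← mul_sum, ← qBinomial_add_eq_sum hq0 hq,
          show j - (k - n) + c = j + c - k + n by omega]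
    _ = ∑ u ∈ range (n + 1), q ^ ((u : ℤ) * (j - k + u)) * qBinomial q j (k - u) *
          ∑ s ∈ range (n + 1), q ^ ((s : ℤ) * (c - n + s)) * qBinomial q (k - c) s *
            qBinomial q c (n - s) * qBinomial q (n - s) u := by
        refine sum_congr rfl fun u hu => ?_
        rw [qBinomial_mul_qBinomial_sub_eq_sum hq0 hq (by rw [mem_range] at hu; omega) hnc hck]
    _ = ∑ s ∈ range (n + 1), ∑ u ∈ range (n + 1), q ^ ((s : ℤ) * (c - n + s)) *
          qBinomial q (k - c) s * qBinomial q c (n - s) *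
            (q ^ ((u : ℤ) * (j - k + u)) * qBinomial q (n - s) u * qBinomial q j (k - u)) := by
        rw [sum_comm]
        refine sum_congr rfl fun u _ => ?_
        rw [mul_sum]
        refine sum_congr rfl fun s _ => ?_
        ring
    _ = _ := sum_congr rfl fun s hs => by rw [hexpand s hs, mul_sum]

end QBinomial

theorem sq_zpow_eq_pow_toNat {M : Type*} [DivInvMonoid M] (x : M) {e : ℤ} (he : 0 ≤ e) :
    (x ^ 2) ^ e = x ^ (2 * e).toNat := by
  lift e to ℕ using he
  rw [zpow_natCast, ← pow_mul]
  congr 1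

theorem qNumber_tQ_sq (n : ℕ) :
    qNumber (tQ ^ 2) n = algebraMap ℚ[X] (RatFunc ℚ) (∑ i ∈ range n, X ^ (2 * i)) := by
  simp [qNumber, tQ, pow_mul, RatFunc.algebraMap_X]

theorem qNumber_tQ_sq_succ_ne_zero (n : ℕ) : qNumber (tQ ^ 2) (n + 1) ≠ 0 := by
  rw [qNumber_tQ_sq]
  refine RatFunc.algebraMap_ne_zero fun h => ?_
  have h1 := congrArg (eval 1) h
  simp only [eval_finsetSum, eval_pow, eval_X, one_pow, sum_const, card_range, nsmul_eq_mul,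
    mul_one, eval_zero] at h1
  exact Nat.cast_ne_zero.2 n.succ_ne_zero h1

theorem tQ_sq_ne_zero : tQ ^ 2 ≠ 0 := pow_ne_zero 2 RatFunc.X_ne_zero

theorem PQ_eq_qFactorial {z : ℤ} {n : ℕ} (h : z = n) : PQ z = qFactorial (tQ ^ 2) n := by
  subst h
  simp [PQ, Ppoly, hpoly, qFactorial, qNumber_tQ_sq]

theorem Hpol_eq_qBinomial {J K C n : ℕ} {p : ℤ} (hp : p = n + 1) (hnK : n ≤ K) (hKJ : K ≤ J) :
    Hpol J K (J + C) p = qBinomial (tQ ^ 2) J (K - n) * qBinomial (tQ ^ 2) (J + C - K + n) n := by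
  rw [Hpol, qBinomial_of_le (by omega), qBinomial_of_le (by omega),
    PQ_eq_qFactorial (n := J) rfl, PQ_eq_qFactorial (n := J + C - K + n) (by omega),
    PQ_eq_qFactorial (n := K - n) (by omega), PQ_eq_qFactorial (n := J - (K - n)) (by omega),
    PQ_eq_qFactorial (n := n) (by omega), PQ_eq_qFactorial (n := J + C - K + n - n) (by omega),
    div_mul_div_comm]
  ring

theorem Ipol_eq_qBinomial {J K C m : ℕ} {p : ℤ} (hp : p = m + 1) (hmC : m ≤ C) (hKJ : K ≤ J + m) :
    Ipol J K (J + C) p = qBinomial (tQ ^ 2) C m * qBinomial (tQ ^ 2) (J + m) K := by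
  rw [Ipol, qBinomial_of_le hmC, qBinomial_of_le hKJ,
    PQ_eq_qFactorial (n := C) (by omega), PQ_eq_qFactorial (n := J + m) (by omega),
    PQ_eq_qFactorial (n := m) (by omega), PQ_eq_qFactorial (n := C - m) (by omega),
    PQ_eq_qFactorial (n := K) rfl, PQ_eq_qFactorial (n := J + m - K) (by omega),
    div_mul_div_comm]
  ring

theorem fpol_eq_qBinomial {K C s : ℕ} {p q : ℤ} (hs : p - q = s) (hCK : C ≤ K) :
    fpol K C p q = qBinomial (tQ ^ 2) (K - C) s := by
  rw [fpol]
  rcases le_or_gt s (K - C) with hsKC | hKCs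
  · rw [if_pos (by omega), qBinomial_of_le hsKC, PQ_eq_qFactorial (n := K - C) (by omega),
      PQ_eq_qFactorial hs, PQ_eq_qFactorial (n := K - C - s) (by omega)]
  · rw [if_neg (by omega), qBinomial_of_lt hKCs]

theorem sum_fpol_mul_Ipol_eq_sum_qBinomial {J K C n : ℕ} {p : ℤ} (hp : p = n + 1) (hnC : n ≤ C)
    (hCK : C ≤ K) (hKJ : K ≤ J) :
    ∑ q ∈ Icc 1 (p - 1), tQ ^ (2 * ((p - q) * (C + 1 - q))).toNat * fpol K C p q *
        Ipol J K (J + C) q =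
      ∑ s ∈ range n, (tQ ^ 2) ^ (((s + 1 : ℕ) : ℤ) * (C - n + (s + 1 : ℕ))) *
        qBinomial (tQ ^ 2) (K - C) (s + 1) * qBinomial (tQ ^ 2) C (n - (s + 1)) *
          qBinomial (tQ ^ 2) (J + n - (s + 1)) K := by
  refine sum_nbij' (fun q => (n - q).toNat) (fun s => n - s) ?_ ?_ ?_ ?_ fun q hq => ?_
  iterate 4
    intro x hx
    simp only [mem_Icc, mem_range] at hx ⊢
    omega
  rw [mem_Icc] at hq
  set s := (n - q).toNat
  have hpq : p - q = ((s + 1 : ℕ) : ℤ) := by omega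
  rw [← sq_zpow_eq_pow_toNat _ (mul_nonneg (by omega) (by omega)), fpol_eq_qBinomial hpq hCK,
    Ipol_eq_qBinomial (m := n - (s + 1)) (by omega) (by omega) (by omega),
    show J + (n - (s + 1)) = J + n - (s + 1) by omega, hpq,
    show (C : ℤ) + 1 - q = C - n + ((s + 1 : ℕ) : ℤ) by omega]
  ring

theorem intersection_cohomology_recursion_general
    (i j k l r c : ℤ)
    (hkj : k ≤ j)
    (hr : r = k - i) (hc : c = l - j) (hrc : r < c) (hck : c < k) :
    ∀ p : ℤ, 2 ≤ p → p ≤ r + 1 →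
      Ipol j k l p =
        Hpol j k l p -
          ∑ q ∈ Finset.Icc 1 (p - 1),
            tQ ^ (2 * ((p - q) * (c + 1 - q))).toNat * fpol k c p q *
              Ipol j k l q := by
  intro p hp2 hpr
  obtain ⟨n, hp⟩ : ∃ n : ℕ, p = n + 1 := ⟨(p - 1).toNat, by omega⟩
  lift c to ℕ using by omega
  lift k to ℕ using by omega
  lift j to ℕ using by omega
  obtain rfl : l = j + c := by omega
  have hmain := qBinomial_mul_qBinomial_eq_sum tQ_sq_ne_zero qNumber_tQ_sq_succ_ne_zero
    (j := j) (n := n) (by omega : n ≤ c) (by omega : c ≤ k) (by exact_mod_cast hkj)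
  rw [sum_range_succ'] at hmain
  rw [sum_fpol_mul_Ipol_eq_sum_qBinomial hp (by omega) (by omega) (by omega),
    Hpol_eq_qBinomial hp (by omega) (by omega), Ipol_eq_qBinomial hp (by omega) (by omega), hmain]
  simp [qBinomial_zero_right qNumber_tQ_sq_succ_ne_zero]

/-- The inductive recursion computing the `I_p` from the `H_p` (Corollary 4.3). -/
theorem intersection_cohomology_recursion
    (i j k l r c : ℤ)
    (hi : 0 < i) (hik : i < k) (hkj : k ≤ j) (hjl : j < l)
    (hr : r = k - i) (hc : c = l - j) (hrc : r < c) (hck : c < k) :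
    ∀ p : ℤ, 2 ≤ p → p ≤ r + 1 →
      Ipol j k l p =
        Hpol j k l p -
          ∑ q ∈ Finset.Icc 1 (p - 1),
            tQ ^ (2 * ((p - q) * (c + 1 - q))).toNat * fpol k c p q *
              Ipol j k l q :=
  intersection_cohomology_recursion_general i j k l r c hkj hr hc hrc hck
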